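/- arXiv:2007.05755 — 4 statements merged into one kernel-verified Lean document; each statement's English description precedes it below -/
import Mathlib

section
/- Let 0 < α < 1 and let x : ℝ → ℝ be continuously differentiable on [t-ω, t] with ω > 0. Then ∫_{t-ω}^{t} (x(t) - x(τ)) · x'(τ) / (t-τ)^α dτ ≥ 0. -/
/-!
Put `h τ = -(x t - x τ)² (t - τ)^(-α) / 2`. For `τ < t`,
`h' τ = (x t - x τ) x' τ / (t - τ)^α - (α / 2) (x t - x τ)² (t - τ)^(-α-1)`,
which is at most the integrand because `α ≥ 0`. As `x` is Lipschitz,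
`|x t - x τ| / (t - τ)^α ≤ K (t - τ)^(1-α) → 0` (here `α < 1`), so `h` is continuous
up to `τ = t` with `h t = 0`, and the integrand is integrable. The one-sided fundamental
theorem of calculus then bounds the integral below by `h t - h (t - ω) ≥ 0`.
-/

open MeasureTheory

open Set Filter Topology NNReal

section

variable {x : ℝ → ℝ} {a t α : ℝ}

lemma abs_sub_div_rpow_le_of_lipschitzOnWith {K : ℝ≥0} (hx : LipschitzOnWith K x (Icc a t))
    (hα : α < 1) {τ : ℝ} (hτ : τ ∈ Icc a t) :
    |(x t - x τ) / (t - τ) ^ α| ≤ K * (t - τ) ^ (1 - α) := by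
  rcases hτ.2.eq_or_lt with rfl | hτt
  · simp [Real.zero_rpow (sub_ne_zero.2 hα.ne')]
  have hpos : 0 < t - τ := sub_pos.2 hτt
  have hlip : |x t - x τ| ≤ K * (t - τ) := by
    simpa [Real.dist_eq, abs_of_pos hpos] using
      hx.dist_le_mul t (right_mem_Icc.2 (hτ.1.trans hτ.2)) τ hτ
  rw [abs_div, abs_of_pos (Real.rpow_pos_of_pos hpos α), Real.rpow_sub hpos, Real.rpow_one,
    mul_div_assoc']
  exact div_le_div_of_nonneg_right hlip (Real.rpow_nonneg hpos.le α)

lemma continuousOn_sub_div_rpow_of_lipschitzOnWith {K : ℝ≥0}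
    (hx : LipschitzOnWith K x (Icc a t)) (hα : α < 1) :
    ContinuousOn (fun τ => (x t - x τ) / (t - τ) ^ α) (Icc a t) := by
  intro τ hτ
  rcases hτ.2.eq_or_lt with rfl | hτt
  · have hlim : Tendsto (fun s => (K : ℝ) * (τ - s) ^ (1 - α)) (𝓝[Icc a τ] τ) (𝓝 0) := by
      have hcont : ContinuousAt (fun s => (K : ℝ) * (τ - s) ^ (1 - α)) τ :=
        continuousAt_const.mul
          ((continuousAt_const.sub continuousAt_id).rpow_const (Or.inr (sub_nonneg.2 hα.le)))
      simpa [Real.zero_rpow (sub_ne_zero.2 hα.ne')] using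
        hcont.tendsto.mono_left nhdsWithin_le_nhds
    -- the value at the endpoint is `0 / 0 ^ α = 0`, the limit forced by the squeeze
    simpa [ContinuousWithinAt] using squeeze_zero_norm' (eventually_nhdsWithin_of_forall
      fun s hs => abs_sub_div_rpow_le_of_lipschitzOnWith hx hα hs) hlim
  · have hpos : 0 < t - τ := sub_pos.2 hτt
    exact (continuousWithinAt_const.sub (hx.continuousOn τ hτ)).div
      ((continuousAt_const.sub continuousAt_id).rpow_const (Or.inl hpos.ne')).continuousWithinAt
      (Real.rpow_pos_of_pos hpos α).ne'

lemma hasDerivAt_neg_half_sq_sub_mul_rpow_neg {x' τ : ℝ} (hx : HasDerivAt x x' τ)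
    (hτ : τ < t) :
    HasDerivAt (fun s => -((x t - x s) ^ 2 * (t - s) ^ (-α)) / 2)
      ((x t - x τ) * x' / (t - τ) ^ α - α / 2 * (x t - x τ) ^ 2 * (t - τ) ^ (-α - 1)) τ := by
  have hsq := (hx.const_sub (x t)).fun_pow 2
  have hpow :=
    ((hasDerivAt_id τ).const_sub t).rpow_const (p := -α) (Or.inl (sub_pos.2 hτ).ne')
  refine ((hsq.fun_mul hpow).neg.div_const 2).congr_deriv ?_
  simp only [id, Real.rpow_neg (sub_pos.2 hτ).le]
  norm_num
  ring

lemma integrableOn_sub_mul_deriv_div_rpow (hat : a < t) (hx : ContDiffOn ℝ 1 x (Icc a t))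
    (hq : ContinuousOn (fun τ => (x t - x τ) / (t - τ) ^ α) (Icc a t)) :
    IntegrableOn (fun τ => (x t - x τ) * deriv x τ / (t - τ) ^ α) (Icc a t) := by
  have hD := hx.continuousOn_derivWithin (uniqueDiffOn_Icc hat) le_rfl
  rw [integrableOn_Icc_iff_integrableOn_Ioo]
  refine ((hq.mul hD).integrableOn_Icc.mono_set Ioo_subset_Icc_self).congr_fun
    (fun τ hτ => ?_) measurableSet_Ioo
  simp only [Pi.mul_apply, derivWithin_of_mem_nhds (Icc_mem_nhds hτ.1 hτ.2)]
  ring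

end

theorem stmt0 (α ω t : ℝ) (x : ℝ → ℝ) (hα0 : 0 < α) (hα1 : α < 1) (hω : 0 < ω)
    (hx : ContDiffOn ℝ 1 x (Set.Icc (t - ω) t)) :
    0 ≤ ∫ τ in (t - ω)..t, (x t - x τ) * deriv x τ / (t - τ) ^ α := by
  set a := t - ω
  have hat : a < t := sub_lt_self t hω
  obtain ⟨K, hK⟩ := hx.exists_lipschitzOnWith one_ne_zero (convex_Icc a t) isCompact_Icc
  have hq := continuousOn_sub_div_rpow_of_lipschitzOnWith hK hα1
  set h : ℝ → ℝ := fun τ => -((x t - x τ) ^ 2 * (t - τ) ^ (-α)) / 2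
  have hh : ContinuousOn h (Icc a t) := by
    have hxt : ContinuousOn (fun τ => x t - x τ) (Icc a t) :=
      continuousOn_const.sub hK.continuousOn
    refine ((hq.mul hxt).neg.div_const 2).congr fun τ hτ => ?_
    simp only [h, Pi.mul_apply, Pi.neg_apply, Real.rpow_neg (sub_nonneg.2 hτ.2)]
    ring
  have hderiv : ∀ τ ∈ Ioo a t, HasDerivAt x (deriv x τ) τ := fun τ hτ =>
    ((hx.differentiableOn one_ne_zero τ (Ioo_subset_Icc_self hτ)).differentiableAt
      (Icc_mem_nhds hτ.1 hτ.2)).hasDerivAt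
  have hFTC := intervalIntegral.sub_le_integral_of_hasDeriv_right_of_le hat.le hh
    (fun τ hτ => (hasDerivAt_neg_half_sq_sub_mul_rpow_neg (hderiv τ hτ) hτ.2).hasDerivWithinAt)
    (integrableOn_sub_mul_deriv_div_rpow hat hx hq)
    (fun τ hτ => sub_le_self _ (by have := sub_pos.2 hτ.2; positivity))
  have hht : h t = 0 := by simp [h]
  have hha : h a ≤ 0 := div_nonpos_of_nonpos_of_nonneg (neg_nonpos.2 (by positivity)) zero_le_two
  linarith
end

section
/- Let 0 < α < 1, ω > 0, t₀ ∈ ℝ, and x : ℝ → ℝ continuously differentiable. With the short memory fractional derivative D̃x(t) = (1/Γ(1-α)) ∫_{s_ω(t)}^{t} (t-τ)^{-α} x'(τ) dτ (where s_ω(t) = max(t₀, t-ω)), for every t ≥ t₀: (1/2) D̃(x²)(t) ≤ x(t) · D̃x(t). -/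
open MeasureTheory

/-- Short memory fractional derivative with window ω and base point t₀. -/
noncomputable def smD (α ω t₀ : ℝ) (f : ℝ → ℝ) (t : ℝ) : ℝ :=
  (1 / Real.Gamma (1 - α)) * ∫ τ in (max t₀ (t - ω))..t, (t - τ) ^ (-α) * deriv f τ

/-!
Write `k τ = (t - τ) ^ (-α)` and `a = max t₀ (t - ω)`. Up to the positive factor `1 / Γ(1 - α)`,
`x t * D̃x t - D̃(x²) t / 2` is `∫ τ in a..t, k τ * (x t - x τ) * x' τ = -(1/2) ∫ k g'` with
`g = (x t - x ·)²`. Integrating by parts on `[a, b]` with `b < t` gives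
`(k a * g a - k b * g b + ∫ k' g) / 2`, where `k' ≥ 0` because the kernel increases. The only
negative term `k b * g b` is `O((t - b) ^ (2 - α))` since `g` vanishes to second order at `t`,
so it disappears in the limit `b → t⁻`.
-/

open Set Filter Topology

theorem integral_mul_deriv_sq_eq {k x : ℝ → ℝ} {a b : ℝ} (c : ℝ)
    (hk : IntervalIntegrable k volume a b) (hx : ContDiff ℝ 1 x) :
    c * (∫ τ in a..b, k τ * deriv x τ) -
        1 / 2 * ∫ τ in a..b, k τ * deriv (fun s => x s ^ 2) τ =
      ∫ τ in a..b, k τ * ((c - x τ) * deriv x τ) := by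
  have hx' : Continuous (deriv x) := hx.continuous_deriv le_rfl
  have hderiv_sq : ∀ τ, deriv (fun s => x s ^ 2) τ = 2 * (x τ * deriv x τ) := fun τ => by
    rw [deriv_fun_pow (hx.differentiable one_ne_zero τ)]
    push_cast
    ring
  have hsplit : ∫ τ in a..b, k τ * ((c - x τ) * deriv x τ) =
      c * (∫ τ in a..b, k τ * deriv x τ) - ∫ τ in a..b, k τ * (x τ * deriv x τ) := by
    rw [← intervalIntegral.integral_const_mul, ← intervalIntegral.integral_sub
      (f := fun τ => c * (k τ * deriv x τ)) (g := fun τ => k τ * (x τ * deriv x τ))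
      ((hk.mul_continuousOn hx'.continuousOn).const_mul c)
      (hk.mul_continuousOn (hx.continuous.mul hx').continuousOn)]
    congr 1 with τ
    ring
  have hsq : ∫ τ in a..b, k τ * deriv (fun s => x s ^ 2) τ =
      2 * ∫ τ in a..b, k τ * (x τ * deriv x τ) := by
    rw [← intervalIntegral.integral_const_mul]
    congr 1 with τ
    rw [hderiv_sq]
    ring
  rw [hsplit, hsq]
  ring

theorem integral_mul_sub_mul_deriv_ge {k k' x x' : ℝ → ℝ} {a b c : ℝ} (hab : a ≤ b)
    (hk : ∀ τ ∈ Icc a b, HasDerivAt k (k' τ) τ) (hk' : ContinuousOn k' (Icc a b))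
    (hk'_nonneg : ∀ τ ∈ Icc a b, 0 ≤ k' τ) (hka : 0 ≤ k a)
    (hx : ∀ τ ∈ Icc a b, HasDerivAt x (x' τ) τ) (hx' : ContinuousOn x' (Icc a b)) :
    -(k b * (c - x b) ^ 2) / 2 ≤ ∫ τ in a..b, k τ * ((c - x τ) * x' τ) := by
  rw [← uIcc_of_le hab] at hk hk' hx hx'
  have hxc : ContinuousOn x (uIcc a b) := fun τ hτ => (hx τ hτ).continuousAt.continuousWithinAt
  have hg : ∀ τ ∈ uIcc a b,
      HasDerivAt (fun s => (c - x s) ^ 2) (-2 * ((c - x τ) * x' τ)) τ := fun τ hτ => by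
    refine (((hx τ hτ).const_sub c).fun_pow 2).congr_deriv ?_
    norm_num
    ring
  have ibp := intervalIntegral.integral_mul_deriv_eq_deriv_mul hk hg hk'.intervalIntegrable
    ((continuousOn_const.mul ((continuousOn_const.sub hxc).mul hx')).intervalIntegrable)
  have hhalf : ∫ τ in a..b, k τ * ((c - x τ) * x' τ) =
      -(1 / 2) * ∫ τ in a..b, k τ * (-2 * ((c - x τ) * x' τ)) := by
    rw [← intervalIntegral.integral_const_mul]
    congr 1 with τ
    ring
  have hrest : 0 ≤ ∫ τ in a..b, k' τ * (c - x τ) ^ 2 :=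
    intervalIntegral.integral_nonneg hab fun τ hτ => mul_nonneg (hk'_nonneg τ hτ) (sq_nonneg _)
  rw [hhalf, ibp]
  linarith [mul_nonneg hka (sq_nonneg (c - x a))]

theorem integral_mul_sub_mul_deriv_nonneg {k k' x x' : ℝ → ℝ} {a t : ℝ} (hat : a ≤ t)
    (hk : ∀ τ ∈ Ico a t, HasDerivAt k (k' τ) τ) (hk' : ContinuousOn k' (Ico a t))
    (hk'_nonneg : ∀ τ ∈ Ico a t, 0 ≤ k' τ) (hk_nonneg : ∀ τ ∈ Ico a t, 0 ≤ k τ)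
    (hk_int : IntervalIntegrable k volume a t)
    (hk_lim : Tendsto (fun b => k b * (t - b) ^ 2) (𝓝[<] t) (𝓝 0))
    (hx : ∀ τ ∈ Icc a t, HasDerivAt x (x' τ) τ) (hx' : ContinuousOn x' (Icc a t)) :
    0 ≤ ∫ τ in a..t, k τ * ((x t - x τ) * x' τ) := by
  rcases hat.eq_or_lt with rfl | hat
  · simp
  obtain ⟨M, hM⟩ := isCompact_Icc.exists_bound_of_continuousOn hx'
  have hlip : ∀ b ∈ Icc a t, |x t - x b| ≤ M * (t - b) := fun b hb =>
    norm_image_sub_le_of_norm_deriv_le_segment'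
      (fun τ hτ => (hx τ ⟨hb.1.trans hτ.1, hτ.2⟩).hasDerivWithinAt)
      (fun τ hτ => hM τ ⟨hb.1.trans hτ.1, hτ.2.le⟩) t ⟨hb.2, le_rfl⟩
  have hlower : ∀ b ∈ Ico a t,
      -(M ^ 2 * (k b * (t - b) ^ 2)) / 2 ≤ ∫ τ in a..b, k τ * ((x t - x τ) * x' τ) := by
    intro b hb
    have hsub : Icc a b ⊆ Ico a t := Icc_subset_Ico_right hb.2
    have hsq : (x t - x b) ^ 2 ≤ M ^ 2 * (t - b) ^ 2 := by
      rw [← mul_pow, ← sq_abs]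
      exact pow_le_pow_left₀ (abs_nonneg _) (hlip b ⟨hb.1, hb.2.le⟩) 2
    have := mul_le_mul_of_nonneg_left hsq (hk_nonneg b hb)
    refine le_trans ?_ (integral_mul_sub_mul_deriv_ge hb.1 (fun τ hτ => hk τ (hsub hτ))
      (hk'.mono hsub) (fun τ hτ => hk'_nonneg τ (hsub hτ)) (hk_nonneg a ⟨le_rfl, hat⟩)
      (fun τ hτ => hx τ (Icc_subset_Icc_right hb.2.le hτ))
      (hx'.mono (Icc_subset_Icc_right hb.2.le)))
    linarith
  have hprimitive : Tendsto (fun b => ∫ τ in a..b, k τ * ((x t - x τ) * x' τ)) (𝓝[<] t)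
      (𝓝 (∫ τ in a..t, k τ * ((x t - x τ) * x' τ))) := by
    have hxc : ContinuousOn x (Icc a t) := fun τ hτ => (hx τ hτ).continuousAt.continuousWithinAt
    have hint : IntervalIntegrable (fun τ => k τ * ((x t - x τ) * x' τ)) volume a t :=
      hk_int.mul_continuousOn
      (((continuousOn_const.sub hxc).mul hx').mono (uIcc_of_le hat.le).subset)
    have := intervalIntegral.continuousOn_primitive_interval' hint left_mem_uIcc t right_mem_uIcc
    rw [uIcc_of_le hat.le] at this
    rw [← nhdsWithin_Ico_eq_nhdsLT hat]
    exact (this.mono Ico_subset_Icc_self).tendsto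
  have hbound : Tendsto (fun b => -(M ^ 2 * (k b * (t - b) ^ 2)) / 2) (𝓝[<] t) (𝓝 0) := by
    simpa using ((hk_lim.const_mul (M ^ 2)).neg.div_const 2)
  exact le_of_tendsto_of_tendsto hbound hprimitive
    (eventually_of_mem (Ico_mem_nhdsLT hat) hlower)

theorem hasDerivAt_sub_rpow_neg {α t τ : ℝ} (hτ : τ < t) :
    HasDerivAt (fun s => (t - s) ^ (-α)) (α * (t - τ) ^ (-α - 1)) τ := by
  refine (((hasDerivAt_id τ).const_sub t).rpow_const
    (Or.inl (sub_ne_zero.2 hτ.ne'))).congr_deriv ?_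
  simp only [id]
  ring

theorem continuousOn_sub_rpow (p t : ℝ) : ContinuousOn (fun s => (t - s) ^ p) (Iio t) :=
  fun _ hs => ((continuous_sub_left t).continuousAt.rpow_const
    (Or.inl (sub_ne_zero.2 (ne_of_gt hs)))).continuousWithinAt

theorem intervalIntegrable_sub_rpow_neg {α : ℝ} (hα : α < 1) (a t : ℝ) :
    IntervalIntegrable (fun s => (t - s) ^ (-α)) volume a t := by
  simpa using ((intervalIntegral.intervalIntegrable_rpow' (a := t - a) (b := t - t)
    (by linarith)).comp_sub_left t)

theorem tendsto_sub_rpow_neg_mul_sq {α : ℝ} (hα : α < 2) (t : ℝ) :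
    Tendsto (fun b => (t - b) ^ (-α) * (t - b) ^ 2) (𝓝[<] t) (𝓝 0) := by
  have h : Tendsto (fun b => (t - b) ^ (-α + 2)) (𝓝 t) (𝓝 0) := by
    have := ((continuous_sub_left t).rpow_const (p := -α + 2)
      fun _ => Or.inr (by linarith)).tendsto t
    simpa [Real.zero_rpow (by linarith : -α + 2 ≠ 0)] using this
  refine (h.mono_left nhdsWithin_le_nhds).congr' (eventually_nhdsWithin_of_forall fun b hb => ?_)
  rw [Real.rpow_add (sub_pos.2 hb), Real.rpow_two]

theorem stmt4 (α ω t₀ t : ℝ) (hα0 : 0 < α) (hα1 : α < 1) (hω : 0 < ω)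
    (x : ℝ → ℝ) (hx : ContDiff ℝ 1 x) (ht : t₀ ≤ t) :
    (1 / 2) * smD α ω t₀ (fun τ => (x τ) ^ 2) t ≤ x t * smD α ω t₀ x t := by
  set a := max t₀ (t - ω)
  have hat : a ≤ t := max_le ht (by linarith)
  have hk_int := intervalIntegrable_sub_rpow_neg hα1 a t
  have hx' : Continuous (deriv x) := hx.continuous_deriv le_rfl
  have hJ := integral_mul_sub_mul_deriv_nonneg hat (fun τ hτ => hasDerivAt_sub_rpow_neg hτ.2)
    (continuousOn_const.mul ((continuousOn_sub_rpow _ t).mono fun _ hτ => hτ.2))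
    (fun τ hτ => mul_nonneg hα0.le (Real.rpow_nonneg (sub_nonneg.2 hτ.2.le) _))
    (fun τ hτ => Real.rpow_nonneg (sub_nonneg.2 hτ.2.le) _) hk_int
    (tendsto_sub_rpow_neg_mul_sq (by linarith) t)
    (fun τ _ => (hx.differentiable one_ne_zero τ).hasDerivAt) hx'.continuousOn
  have hC : 0 ≤ 1 / Real.Gamma (1 - α) :=
    (one_div_pos.2 (Real.Gamma_pos_of_pos (by linarith))).le
  have hsplit := integral_mul_deriv_sq_eq (x t) hk_int hx
  unfold smD
  linear_combination mul_nonneg hC hJ - 1 / Real.Gamma (1 - α) * hsplit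
end

section
/- Let 0 < α < 1, ω > 0, t₀ ∈ ℝ, and x : ℝ → ℝⁿ continuously differentiable. With the componentwise short memory fractional derivative D̃ (lower limit s_ω(t) = max(t₀, t-ω)), for every t ≥ t₀: (1/2) D̃(‖x‖²)(t) ≤ ⟨x(t), D̃x(t)⟩, where ⟨·,·⟩ is the Euclidean inner product. -/
/-!
With `g s = ‖x s - x t‖ ^ 2`, expanding the square and linearity of `smD` give
`smD g t = smD ‖x‖² t - 2 ⟪x t, smD x t⟫`, so it suffices that `smD g t ≤ 0` for a `C¹` function
`g ≥ 0` with `g t = 0`. Integrating by parts on `[a, b]` with `b < t`, the weight `(t - τ) ^ (-α)`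
is increasing and `g ≥ 0`, so `∫ τ in a..b, (t - τ) ^ (-α) * g' τ ≤ (t - b) ^ (-α) * g b`; as `g`
vanishes to first order at `t`, the right side is `O((t - b) ^ (1 - α))`, which tends to `0`.
-/

open MeasureTheory

open Filter Topology Set

theorem intervalIntegral.integral_mul_deriv_le_of_deriv_nonneg {u u' v v' : ℝ → ℝ} {a b : ℝ}
    (hab : a ≤ b) (hu : ∀ x ∈ Icc a b, HasDerivAt u (u' x) x)
    (hv : ∀ x ∈ Icc a b, HasDerivAt v (v' x) x) (hu' : IntervalIntegrable u' volume a b)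
    (hv' : IntervalIntegrable v' volume a b) (hua : 0 ≤ u a)
    (hu'_nonneg : ∀ x ∈ Icc a b, 0 ≤ u' x) (hv_nonneg : ∀ x ∈ Icc a b, 0 ≤ v x) :
    ∫ x in a..b, u x * v' x ≤ u b * v b := by
  rw [← uIcc_of_le hab] at hu hv
  rw [intervalIntegral.integral_mul_deriv_eq_deriv_mul hu hv hu' hv']
  have h_int : 0 ≤ ∫ x in a..b, u' x * v x :=
    intervalIntegral.integral_nonneg hab fun x hx ↦ mul_nonneg (hu'_nonneg x hx) (hv_nonneg x hx)
  linarith [mul_nonneg hua (hv_nonneg a ⟨le_rfl, hab⟩)]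

theorem intervalIntegrable_sub_rpow_neg_mul {α : ℝ} (hα : α < 1) {f : ℝ → ℝ} (hf : Continuous f)
    (t a b : ℝ) : IntervalIntegrable (fun τ ↦ (t - τ) ^ (-α) * f τ) volume a b := by
  have h := (intervalIntegral.intervalIntegrable_rpow' (r := -α) (a := t - a) (b := t - b)
    (by linarith)).comp_sub_left t
  simp only [sub_sub_cancel] at h
  exact h.mul_continuousOn hf.continuousOn

theorem tendsto_sub_rpow_neg_mul_of_hasDerivAt {α t g' : ℝ} {g : ℝ → ℝ} (hα : α < 1)
    (hg : HasDerivAt g g' t) (hgt : g t = 0) :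
    Tendsto (fun b ↦ (t - b) ^ (-α) * g b) (𝓝[<] t) (𝓝 0) := by
  have h_pow : Tendsto (fun b ↦ (t - b) ^ (1 - α)) (𝓝[<] t) (𝓝 0) := by
    have h : Tendsto (fun b ↦ (t - b) ^ (1 - α)) (𝓝 t) (𝓝 ((t - t) ^ (1 - α))) :=
      ((continuous_const.sub continuous_id).rpow_const fun _ ↦ Or.inr (by linarith)).tendsto t
    rw [sub_self, Real.zero_rpow (by linarith)] at h
    exact h.mono_left nhdsWithin_le_nhds
  have h_slope := (hasDerivAt_iff_tendsto_slope.1 hg).mono_left (nhdsLT_le_nhdsNE t)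
  have h := (h_pow.mul h_slope).neg
  rw [zero_mul, neg_zero] at h
  refine h.congr' ?_
  filter_upwards [self_mem_nhdsWithin] with b (hb : b < t)
  have htb : t - b ≠ 0 := sub_ne_zero.2 hb.ne'
  rw [slope_def_field, hgt, sub_zero, sub_eq_neg_add 1 α, Real.rpow_add_one htb,
    ← neg_sub t b]
  field_simp

theorem intervalIntegral.integral_sub_rpow_neg_mul_deriv_nonpos {α a t : ℝ} {g : ℝ → ℝ}
    (hα0 : 0 ≤ α) (hα1 : α < 1) (hat : a ≤ t) (hg : ContDiff ℝ 1 g)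
    (hg_nonneg : ∀ s ∈ Icc a t, 0 ≤ g s) (hgt : g t = 0) : ∫ τ in a..t, (t - τ) ^ (-α) * deriv g τ ≤ 0 := by
  rcases hat.eq_or_lt with rfl | hat
  · simp
  have hg_diff : Differentiable ℝ g := hg.differentiable one_ne_zero
  have hg'_cont : Continuous (deriv g) := hg.continuous_deriv le_rfl
  have h_primitive : Tendsto (fun b ↦ ∫ τ in a..b, (t - τ) ^ (-α) * deriv g τ) (𝓝[<] t)
      (𝓝 (∫ τ in a..t, (t - τ) ^ (-α) * deriv g τ)) :=
    ((intervalIntegral.continuous_primitive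
      (fun _ _ ↦ intervalIntegrable_sub_rpow_neg_mul hα1 hg'_cont t _ _) a).tendsto t).mono_left
      nhdsWithin_le_nhds
  have h_bound : ∀ b ∈ Ioo a t,
      ∫ τ in a..b, (t - τ) ^ (-α) * deriv g τ ≤ (t - b) ^ (-α) * g b := by
    intro b hb
    have h_pos : ∀ τ ∈ Icc a b, 0 < t - τ := fun τ hτ ↦ by linarith [hτ.2, hb.2]
    refine intervalIntegral.integral_mul_deriv_le_of_deriv_nonneg hb.1.le
      (u' := fun τ ↦ α * (t - τ) ^ (-α - 1)) (fun τ hτ ↦ ?_) (fun τ _ ↦ (hg_diff τ).hasDerivAt)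
      ?_ (hg'_cont.intervalIntegrable _ _) (Real.rpow_nonneg (by linarith) _)
      (fun τ hτ ↦ mul_nonneg hα0 (Real.rpow_nonneg (h_pos τ hτ).le _))
      (fun s hs ↦ hg_nonneg s ⟨hs.1, hs.2.trans hb.2.le⟩)
    · convert ((hasDerivAt_id' τ).const_sub t).rpow_const (p := -α) (Or.inl (h_pos τ hτ).ne')
        using 1
      ring_nf
    · refine ContinuousOn.intervalIntegrable fun τ hτ ↦ ?_
      rw [uIcc_of_le hb.1.le] at hτ
      exact (continuousAt_const.mul ((continuousAt_const.sub continuousAt_id).rpow_const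
        (Or.inl (h_pos τ hτ).ne'))).continuousWithinAt
  exact le_of_tendsto_of_tendsto h_primitive
    (tendsto_sub_rpow_neg_mul_of_hasDerivAt hα1 (hg_diff t).hasDerivAt hgt)
    (eventually_of_mem (Ioo_mem_nhdsLT hat) h_bound)

section smD

variable {α ω t₀ t : ℝ}

theorem smD_nonpos_of_nonneg_of_eq_zero {g : ℝ → ℝ} (hα0 : 0 ≤ α) (hα1 : α < 1) (hω : 0 ≤ ω)
    (ht : t₀ ≤ t) (hg : ContDiff ℝ 1 g) (hg_nonneg : ∀ s, 0 ≤ g s) (hgt : g t = 0) :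
    smD α ω t₀ g t ≤ 0 := by
  have hΓ : 0 < Real.Gamma (1 - α) := Real.Gamma_pos_of_pos (sub_pos.2 hα1)
  exact mul_nonpos_of_nonneg_of_nonpos (by positivity)
    (intervalIntegral.integral_sub_rpow_neg_mul_deriv_nonpos hα0 hα1 (max_le ht (by linarith)) hg
      (fun s _ ↦ hg_nonneg s) hgt)

theorem smD_add_const (f : ℝ → ℝ) (c : ℝ) : smD α ω t₀ (fun s ↦ f s + c) t = smD α ω t₀ f t := by
  simp only [smD, deriv_add_const]

theorem smD_const_mul (f : ℝ → ℝ) (c : ℝ) :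
    smD α ω t₀ (fun s ↦ c * f s) t = c * smD α ω t₀ f t := by
  simp only [smD, deriv_const_mul_field', mul_left_comm _ c, intervalIntegral.integral_const_mul]

theorem smD_sub {f g : ℝ → ℝ} (hα : α < 1) (hf : ContDiff ℝ 1 f) (hg : ContDiff ℝ 1 g) :
    smD α ω t₀ (fun s ↦ f s - g s) t = smD α ω t₀ f t - smD α ω t₀ g t := by
  simp only [smD, ← mul_sub]
  rw [← intervalIntegral.integral_sub
    (intervalIntegrable_sub_rpow_neg_mul hα (hf.continuous_deriv le_rfl) _ _ _)
    (intervalIntegrable_sub_rpow_neg_mul hα (hg.continuous_deriv le_rfl) _ _ _)]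
  congr 1
  refine intervalIntegral.integral_congr fun τ _ ↦ ?_
  rw [deriv_fun_sub (hf.differentiable one_ne_zero τ) (hg.differentiable one_ne_zero τ), mul_sub]

theorem smD_sum {ι : Type*} {s : Finset ι} {f : ι → ℝ → ℝ} (hα : α < 1)
    (hf : ∀ i ∈ s, ContDiff ℝ 1 (f i)) :
    smD α ω t₀ (fun τ ↦ ∑ i ∈ s, f i τ) t = ∑ i ∈ s, smD α ω t₀ (f i) t := by
  simp only [smD, ← Finset.mul_sum]
  rw [← intervalIntegral.integral_finsetSum fun i hi ↦
    intervalIntegrable_sub_rpow_neg_mul hα ((hf i hi).continuous_deriv le_rfl) _ _ _]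
  congr 1
  refine intervalIntegral.integral_congr fun τ _ ↦ ?_
  rw [deriv_fun_sum fun i hi ↦ (hf i hi).differentiable one_ne_zero τ, Finset.mul_sum]

end smD

theorem stmt5 (n : ℕ) (α ω t₀ t : ℝ) (hα0 : 0 < α) (hα1 : α < 1) (hω : 0 < ω)
    (x : ℝ → EuclideanSpace ℝ (Fin n)) (hx : ContDiff ℝ 1 x) (ht : t₀ ≤ t) :
    (1 / 2) * smD α ω t₀ (fun τ => ‖x τ‖ ^ 2) t
      ≤ ∑ i, x t i * smD α ω t₀ (fun τ => x τ i) t := by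
  have hx_coord : ∀ i, ContDiff ℝ 1 fun τ ↦ x τ i := fun i ↦ by
    simpa [Function.comp_def] using (EuclideanSpace.proj i).contDiff.comp hx
  have h_expand : (fun s ↦ ‖x s - x t‖ ^ 2) =
      fun s ↦ ‖x s‖ ^ 2 - 2 * ∑ i, x t i * x s i + ‖x t‖ ^ 2 := by
    funext s
    rw [norm_sub_sq_real, PiLp.inner_apply]
    simp
  have h_nonpos := smD_nonpos_of_nonneg_of_eq_zero (ω := ω) (t₀ := t₀)
    (g := fun s ↦ ‖x s - x t‖ ^ 2) hα0.le hα1 hω.le ht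
    ((hx.sub contDiff_const).norm_sq ℝ) (fun s ↦ by positivity) (by simp)
  rw [h_expand, smD_add_const, smD_sub hα1 (hx.norm_sq ℝ) (by fun_prop), smD_const_mul,
    smD_sum hα1 fun i _ ↦ contDiff_const.mul (hx_coord i)] at h_nonpos
  simp only [smD_const_mul] at h_nonpos
  linarith
end

section
/- Let 0 < α < 1, ω > 0, t₀ ∈ ℝ, and x : [t₀, ∞) → ℝ continuously differentiable and nonnegative. Then for every t > t₀ + ω: the Caputo derivative with lower limit t₀ satisfies ᶜD^α_{t₀} x(t) ≤ D̃x(t) + x(t-ω)/(ω^α Γ(1-α)), where D̃ is the short memory derivative with lower limit t-ω. -/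
/-!
Split the Caputo integral at `t - ω`. On `[t₀, t - ω]` the kernel `(t - τ) ^ (-α)` is smooth and
increasing, so integrating by parts gives
`∫ (t - τ) ^ (-α) x' = ω ^ (-α) x (t - ω) - (t - t₀) ^ (-α) x t₀ - α ∫ (t - τ) ^ (-α - 1) x`,
and the last two terms are nonpositive because `x ≥ 0`.
-/

open MeasureTheory Set
open scoped Interval

section Kernel

variable {t : ℝ}

theorem hasDerivAt_sub_rpow {r τ : ℝ} (hτ : τ < t) :
    HasDerivAt (fun σ => (t - σ) ^ r) (-r * (t - τ) ^ (r - 1)) τ := by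
  simpa using ((hasDerivAt_id τ).const_sub t).rpow_const (p := r) (Or.inl (sub_pos.2 hτ).ne')

theorem intervalIntegrable_sub_rpow {r : ℝ} (hr : -1 < r) (a b : ℝ) :
    IntervalIntegrable (fun τ => (t - τ) ^ r) volume a b := by
  simpa using
    (intervalIntegral.intervalIntegrable_rpow' (a := t - a) (b := t - b) hr).comp_sub_left t

end Kernel

section Derivative

variable {x : ℝ → ℝ} {a b c : ℝ}

theorem eqOn_deriv_derivWithin_Ici (hb : a ≤ b) (hc : a ≤ c) :
    EqOn (deriv x) (derivWithin x (Ici a)) (Ι b c) := fun _ hτ =>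
  (derivWithin_of_mem_nhds (Ici_mem_nhds ((le_min hb hc).trans_lt hτ.1))).symm

theorem ContDiffOn.intervalIntegrable_deriv_Ici (hx : ContDiffOn ℝ 1 x (Ici a))
    (hb : a ≤ b) (hc : a ≤ c) : IntervalIntegrable (deriv x) volume b c := by
  refine (intervalIntegrable_congr (eqOn_deriv_derivWithin_Ici hb hc)).2 ?_
  exact ((hx.continuousOn_derivWithin (uniqueDiffOn_Ici a) le_rfl).mono
    fun τ hτ => (le_min hb hc).trans hτ.1).intervalIntegrable

theorem ContDiffOn.intervalIntegrable_mul_deriv_Ici (hx : ContDiffOn ℝ 1 x (Ici a))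
    {g : ℝ → ℝ} (hg : IntervalIntegrable g volume b c) (hb : a ≤ b) (hc : a ≤ c) :
    IntervalIntegrable (fun τ => g τ * deriv x τ) volume b c := by
  refine (intervalIntegrable_congr fun τ hτ =>
    congrArg (g τ * ·) (eqOn_deriv_derivWithin_Ici hb hc hτ)).2 ?_
  exact hg.mul_continuousOn ((hx.continuousOn_derivWithin (uniqueDiffOn_Ici a) le_rfl).mono
    fun τ hτ => (le_min hb hc).trans hτ.1)

end Derivative

variable {α t : ℝ} {x : ℝ → ℝ}

theorem integral_sub_rpow_neg_mul_deriv_le {a b : ℝ} {x' : ℝ → ℝ} (hα : 0 ≤ α) (hab : a ≤ b)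
    (hbt : b < t) (hx : ContinuousOn x (Icc a b)) (hxx' : ∀ τ ∈ Ioo a b, HasDerivAt x (x' τ) τ)
    (hx' : IntervalIntegrable x' volume a b) (hpos : ∀ τ ∈ Icc a b, 0 ≤ x τ) :
    ∫ τ in a..b, (t - τ) ^ (-α) * x' τ ≤ (t - b) ^ (-α) * x b := by
  have hlt : ∀ τ ∈ Icc a b, τ < t := fun τ hτ => hτ.2.trans_lt hbt
  have hpow (r : ℝ) : ContinuousOn (fun τ => (t - τ) ^ r) (Icc a b) :=
    (continuousOn_const.sub continuousOn_id).rpow_const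
      fun τ hτ => Or.inl (sub_pos.2 (hlt τ hτ)).ne'
  have hkernel := hpow (-α)
  have hkernel' : ContinuousOn (fun τ => α * (t - τ) ^ (-α - 1)) (Icc a b) :=
    continuousOn_const.mul (hpow (-α - 1))
  rw [← uIcc_of_le hab] at hkernel hkernel' hx
  have hibp := intervalIntegral.integral_mul_deriv_eq_deriv_mul_of_hasDeriv_right hkernel hx
    (fun τ hτ => by
      rw [min_eq_left hab, max_eq_right hab] at hτ
      simpa using (hasDerivAt_sub_rpow (r := -α) (hlt τ (Ioo_subset_Icc_self hτ))).hasDerivWithinAt)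
    (fun τ hτ => by
      rw [min_eq_left hab, max_eq_right hab] at hτ
      exact (hxx' τ hτ).hasDerivWithinAt)
    hkernel'.intervalIntegrable hx'
  have hremainder : 0 ≤ ∫ τ in a..b, α * (t - τ) ^ (-α - 1) * x τ :=
    intervalIntegral.integral_nonneg hab fun τ hτ => by
      have := sub_pos.2 (hlt τ hτ)
      have := hpos τ hτ
      positivity
  have hboundary : 0 ≤ (t - a) ^ (-α) * x a := by
    have := sub_pos.2 (hlt a (left_mem_Icc.2 hab))
    have := hpos a (left_mem_Icc.2 hab)
    positivity
  linarith

theorem integral_sub_rpow_neg_mul_deriv_le_add {a s : ℝ} (hα0 : 0 ≤ α) (hα1 : α < 1)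
    (has : a ≤ s) (hst : s < t) (hx : ContDiffOn ℝ 1 x (Ici a)) (hpos : ∀ τ, a ≤ τ → 0 ≤ x τ) :
    ∫ τ in a..t, (t - τ) ^ (-α) * deriv x τ
      ≤ (∫ τ in s..t, (t - τ) ^ (-α) * deriv x τ) + (t - s) ^ (-α) * x s := by
  have hint : ∀ b c, a ≤ b → a ≤ c →
      IntervalIntegrable (fun τ => (t - τ) ^ (-α) * deriv x τ) volume b c := fun b c hb hc =>
    hx.intervalIntegrable_mul_deriv_Ici (intervalIntegrable_sub_rpow (by linarith) b c) hb hc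
  have hmemory := integral_sub_rpow_neg_mul_deriv_le hα0 has hst
    (hx.continuousOn.mono Icc_subset_Ici_self)
    (fun τ hτ => ((hx.differentiableOn one_ne_zero τ hτ.1.le).differentiableAt
      (Ici_mem_nhds hτ.1)).hasDerivAt)
    (hx.intervalIntegrable_deriv_Ici le_rfl has) (fun τ hτ => hpos τ hτ.1)
  rw [← intervalIntegral.integral_add_adjacent_intervals (hint a s le_rfl has)
    (hint s t has (has.trans hst.le))]
  linarith

theorem stmt6 (α ω t₀ t : ℝ) (hα0 : 0 < α) (hα1 : α < 1) (hω : 0 < ω)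
    (x : ℝ → ℝ) (hx : ContDiffOn ℝ 1 x (Set.Ici t₀))
    (hpos : ∀ τ, t₀ ≤ τ → 0 ≤ x τ) (ht : t > t₀ + ω) :
    (1 / Real.Gamma (1 - α)) * ∫ τ in t₀..t, (t - τ) ^ (-α) * deriv x τ
      ≤ ((1 / Real.Gamma (1 - α)) * ∫ τ in (t - ω)..t, (t - τ) ^ (-α) * deriv x τ)
        + x (t - ω) / (ω ^ α * Real.Gamma (1 - α)) := by
  have hΓ : 0 < Real.Gamma (1 - α) := Real.Gamma_pos_of_pos (by linarith)
  have hsplit := integral_sub_rpow_neg_mul_deriv_le_add hα0.le hα1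
    (by linarith : t₀ ≤ t - ω) (by linarith : t - ω < t) hx hpos
  rw [sub_sub_cancel, Real.rpow_neg hω.le] at hsplit
  calc (1 / Real.Gamma (1 - α)) * ∫ τ in t₀..t, (t - τ) ^ (-α) * deriv x τ
      ≤ (1 / Real.Gamma (1 - α)) *
          ((∫ τ in (t - ω)..t, (t - τ) ^ (-α) * deriv x τ) + (ω ^ α)⁻¹ * x (t - ω)) := by
        gcongr
    _ = _ := by
        rw [mul_add, div_eq_mul_inv (x (t - ω)), mul_inv]
        ring
end
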